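/- arXiv:2204.09615 — 4 statements merged into one kernel-verified Lean document; each statement's English description precedes it below -/
import Mathlib

section
/- Let Z ∈ ℝ^{n×n} be symmetric with 0 ≺ Z ≺ I (so Z and I − Z are both positive definite). Then for all matrices G, G̃, N, Ñ ∈ ℝ^{n×ℓ} and any symmetric T ∈ ℝ^{ℓ×ℓ}: T + Gᵀ N + Nᵀ G ⪯ T + G̃ᵀ N + Nᵀ G̃ + Gᵀ Ñ + Ñᵀ G − G̃ᵀ Ñ − Ñᵀ G̃ + (G − G̃)ᵀ Z⁻¹ (G − G̃) + (N − Ñ)ᵀ (I − Z)⁻¹ (N − Ñ), with equality when G̃ = G and Ñ = N. -/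
/-!
Put `A = G - G̃` and `B = N - Ñ`. The gap between the two sides is
`Aᵀ Z⁻¹ A + Bᵀ (I - Z)⁻¹ B - Aᵀ B - Bᵀ A`. Completing the square,
`Aᵀ Z⁻¹ A + Bᵀ Z B - Aᵀ B - Bᵀ A = (Z⁻¹ A - B)ᵀ Z (Z⁻¹ A - B) ⪰ 0`, and `Z ⪯ (I - Z)⁻¹`
because `W⁻¹ - (I - W) = (I - W) W⁻¹ (I - W) + I` for every positive definite `W`.
-/

open Matrix

open scoped MatrixOrder ComplexOrder

namespace Matrix

variable {𝕜 m n : Type*} [RCLike 𝕜] [Fintype m] [Fintype n]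

theorem conjTranspose_mul_mul_le_of_le {P Q : Matrix n n 𝕜} (h : P ≤ Q) (B : Matrix n m 𝕜) :
    Bᴴ * P * B ≤ Bᴴ * Q * B := by
  rw [le_iff, ← Matrix.sub_mul, ← Matrix.mul_sub]
  exact (le_iff.mp h).conjTranspose_mul_mul_same B

variable [DecidableEq n]

theorem PosDef.one_sub_le_inv {Q : Matrix n n 𝕜} (hQ : Q.PosDef) : 1 - Q ≤ Q⁻¹ := by
  have hdet := (isUnit_iff_isUnit_det Q).mp hQ.isUnit
  have key : Q⁻¹ - (1 - Q) = (1 - Q)ᴴ * Q⁻¹ * (1 - Q) + 1 := by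
    rw [conjTranspose_sub, conjTranspose_one, hQ.isHermitian.eq]
    simp only [Matrix.sub_mul, Matrix.mul_sub, Matrix.one_mul, Matrix.mul_one,
      mul_nonsing_inv Q hdet, nonsing_inv_mul Q hdet]
    abel
  rw [le_iff, key]
  exact (hQ.inv.posSemidef.conjTranspose_mul_mul_same _).add PosSemidef.one

theorem PosDef.conjTranspose_mul_add_le {P : Matrix n n 𝕜} (hP : P.PosDef) (A B : Matrix n m 𝕜) :
    Aᴴ * B + Bᴴ * A ≤ Aᴴ * P⁻¹ * A + Bᴴ * P * B := by
  have hdet := (isUnit_iff_isUnit_det P).mp hP.isUnit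
  have key : Aᴴ * P⁻¹ * A + Bᴴ * P * B - (Aᴴ * B + Bᴴ * A)
      = (P⁻¹ * A - B)ᴴ * P * (P⁻¹ * A - B) := by
    rw [conjTranspose_sub, conjTranspose_mul, hP.isHermitian.inv.eq]
    simp only [Matrix.sub_mul, Matrix.mul_sub, Matrix.mul_assoc,
      mul_nonsing_inv_cancel_left _ _ hdet, nonsing_inv_mul_cancel_left _ _ hdet]
    abel
  rw [le_iff, key]
  exact hP.posSemidef.conjTranspose_mul_mul_same _

theorem conjTranspose_mul_add_le_of_add_eq_one {Z W : Matrix n n 𝕜} (hZ : Z.PosDef)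
    (hW : W.PosDef) (hZW : Z + W = 1) (A B : Matrix n m 𝕜) :
    Aᴴ * B + Bᴴ * A ≤ Aᴴ * Z⁻¹ * A + Bᴴ * W⁻¹ * B := by
  have hZ_le : Z ≤ W⁻¹ := eq_sub_of_add_eq hZW ▸ hW.one_sub_le_inv
  calc Aᴴ * B + Bᴴ * A ≤ Aᴴ * Z⁻¹ * A + Bᴴ * Z * B := hZ.conjTranspose_mul_add_le A B
    _ ≤ Aᴴ * Z⁻¹ * A + Bᴴ * W⁻¹ * B := by
      gcongr
      exact conjTranspose_mul_mul_le_of_le hZ_le B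

end Matrix

theorem psd_overestimate_general
    {n ℓ : ℕ} (Z : Matrix (Fin n) (Fin n) ℝ)
    (hZ : Z.PosDef) (hZ' : ((1 : Matrix (Fin n) (Fin n) ℝ) - Z).PosDef)
    (T : Matrix (Fin ℓ) (Fin ℓ) ℝ)
    (G G' N N' : Matrix (Fin n) (Fin ℓ) ℝ) :
    ((T + G'ᵀ * N + Nᵀ * G' + Gᵀ * N' + N'ᵀ * G - G'ᵀ * N' - N'ᵀ * G'
        + (G - G')ᵀ * Z⁻¹ * (G - G')
        + (N - N')ᵀ * ((1 : Matrix (Fin n) (Fin n) ℝ) - Z)⁻¹ * (N - N'))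
      - (T + Gᵀ * N + Nᵀ * G)).PosSemidef ∧
    (G' = G → N' = N →
      T + G'ᵀ * N + Nᵀ * G' + Gᵀ * N' + N'ᵀ * G - G'ᵀ * N' - N'ᵀ * G'
        + (G - G')ᵀ * Z⁻¹ * (G - G')
        + (N - N')ᵀ * ((1 : Matrix (Fin n) (Fin n) ℝ) - Z)⁻¹ * (N - N')
      = T + Gᵀ * N + Nᵀ * G) := by
  constructor
  · have hle := conjTranspose_mul_add_le_of_add_eq_one hZ hZ' (add_sub_cancel Z 1)
      (G - G') (N - N')
    simp only [conjTranspose_eq_transpose_of_trivial] at hle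
    refine le_iff.mp (le_of_sub_nonneg ?_)
    convert sub_nonneg.mpr hle using 1
    simp only [transpose_sub, Matrix.sub_mul, Matrix.mul_sub]
    abel
  · rintro rfl rfl
    simp only [sub_self, transpose_zero, Matrix.zero_mul]
    abel

/-- psd-overestimate property: for symmetric `Z` with `0 ≺ Z ≺ I`, the bilinear
term `T + Gᵀ N + Nᵀ G` is bounded above (in the Loewner order) by the convex
overestimate, with equality when `G̃ = G` and `Ñ = N`. -/
theorem psd_overestimate
    {n ℓ : ℕ} (Z : Matrix (Fin n) (Fin n) ℝ)
    (hZ : Z.PosDef) (hZ' : ((1 : Matrix (Fin n) (Fin n) ℝ) - Z).PosDef)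
    (T : Matrix (Fin ℓ) (Fin ℓ) ℝ) (hT : T.IsSymm)
    (G G' N N' : Matrix (Fin n) (Fin ℓ) ℝ) :
    ((T + G'ᵀ * N + Nᵀ * G' + Gᵀ * N' + N'ᵀ * G - G'ᵀ * N' - N'ᵀ * G'
        + (G - G')ᵀ * Z⁻¹ * (G - G')
        + (N - N')ᵀ * ((1 : Matrix (Fin n) (Fin n) ℝ) - Z)⁻¹ * (N - N'))
      - (T + Gᵀ * N + Nᵀ * G)).PosSemidef ∧
    (G' = G → N' = N →
      T + G'ᵀ * N + Nᵀ * G' + Gᵀ * N' + N'ᵀ * G - G'ᵀ * N' - N'ᵀ * G'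
        + (G - G')ᵀ * Z⁻¹ * (G - G')
        + (N - N')ᵀ * ((1 : Matrix (Fin n) (Fin n) ℝ) - Z)⁻¹ * (N - N')
      = T + Gᵀ * N + Nᵀ * G) :=
  psd_overestimate_general Z hZ hZ' T G G' N N'
end

section
/- Let f ∈ C¹([-r,0]; ℝ^d) satisfy f'(τ) = Π f(τ) for some Π ∈ ℝ^{d×d}, and let F(τ) = (√F f(τ)) ⊗ I_ν for a fixed symmetric positive definite F ∈ ℝ^{d×d}. Then for any continuous x : [t−r, t] → ℝ^ν that is differentiable, d/dt ∫_{-r}^0 F(τ) x(t+τ) dτ = F(0) x(t) − F(−r) x(t−r) − ((√F Π √F⁻¹) ⊗ I_ν) ∫_{-r}^0 F(τ) x(t+τ) dτ. -/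
open Matrix Kronecker intervalIntegral

/-!
Let `V` be a primitive of `x`. Integrating by parts in `τ`,
`∫ u(τ) x(s+τ) dτ = u(0) V(s) - u(-r) V(s-r) - ∫ u'(τ) V(s+τ) dτ`, and the last integral may be
differentiated in `s` under the integral sign because `V` is `C¹`. For `u = √F f` the ODE
`f' = Π f` becomes `u' = (√F Π √F⁻¹) u`, and `(M ⊗ I) (u ⊗ w) = (M u) ⊗ w` pulls the matrix out of
the remaining integral.

The matrix `Fm τ` acts as `w ↦ u(τ) ⊗ w`; we write `u ⊗ w` as the product `(u ∘ fst) * (w ∘ snd)`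
in the normed algebra `m × n → ℝ`, so that integration by parts in a normed ring applies.
-/

open MeasureTheory Set Metric
open scoped Interval

namespace Matrix

variable {m n : Type*} [Fintype n] [DecidableEq n] {R : Type*} [CommSemiring R]

theorem of_mul_one_mulVec (g : m → R) (w : n → R) :
    (of fun (p : m × n) j => g p.1 * (1 : Matrix n n R) p.2 j) *ᵥ w
      = (g ∘ Prod.fst) * (w ∘ Prod.snd) := by
  ext p
  simp [mulVec, dotProduct, one_apply]

theorem kronecker_one_mulVec_mul [Fintype m] (M : Matrix m m R) (g : m → R) (w : n → R) :
    (M ⊗ₖ (1 : Matrix n n R)) *ᵥ ((g ∘ Prod.fst) * (w ∘ Prod.snd))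
      = ((M *ᵥ g) ∘ Prod.fst) * (w ∘ Prod.snd) := by
  ext p
  simp [mulVec, dotProduct, Fintype.sum_prod_type, kroneckerMap_apply, one_apply, Finset.sum_mul,
    mul_assoc]

end Matrix

theorem HasDerivAt.const_mulVec {m n : Type*} [Fintype m] [Fintype n] {f : ℝ → n → ℝ}
    {f' : n → ℝ} {x : ℝ} (M : Matrix m n ℝ) (hf : HasDerivAt f f' x) :
    HasDerivAt (fun y => M *ᵥ f y) (M *ᵥ f') x :=
  ((mulVecLin M).toContinuousLinearMap.hasFDerivAt (x := f x)).comp_hasDerivAt x hf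

namespace intervalIntegral

variable {A : Type*} [NormedRing A] [NormedAlgebra ℝ A] {a b : ℝ}

theorem integral_mulVec {m n : Type*} [Fintype m] [Fintype n] {φ : ℝ → n → ℝ}
    (M : Matrix m n ℝ) (hφ : IntervalIntegrable φ volume a b) :
    ∫ τ in a..b, M *ᵥ φ τ = M *ᵥ ∫ τ in a..b, φ τ :=
  (mulVecLin M).toContinuousLinearMap.intervalIntegral_comp_comm hφ

theorem integral_mul_comp_add_eq_of_hasDerivAt [CompleteSpace A] {u u' V v : ℝ → A}
    (hu : ∀ τ ∈ [[a, b]], HasDerivAt u (u' τ) τ) (hu' : IntervalIntegrable u' volume a b)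
    (hV : ∀ s, HasDerivAt V (v s) s) (hv : Continuous v) (s : ℝ) :
    ∫ τ in a..b, u τ * v (s + τ) =
      u b * V (s + b) - u a * V (s + a) - ∫ τ in a..b, u' τ * V (s + τ) :=
  integral_mul_deriv_eq_deriv_mul hu (fun τ _ => (hV (s + τ)).comp_const_add s τ) hu'
    ((hv.comp (continuous_const_add s)).intervalIntegrable a b)

theorem hasDerivAt_integral_mul_comp_add_of_hasDerivAt [CompleteSpace A] {h V v : ℝ → A}
    (hh : IntervalIntegrable h volume a b) (hV : ∀ s, HasDerivAt V (v s) s) (hv : Continuous v)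
    (t : ℝ) :
    HasDerivAt (fun s => ∫ τ in a..b, h τ * V (s + τ)) (∫ τ in a..b, h τ * v (t + τ)) t := by
  have hVc : Continuous V := continuous_iff_continuousAt.2 fun s => (hV s).continuousAt
  obtain ⟨C, hC⟩ := ((isCompact_closedBall t 1).prod isCompact_uIcc).exists_bound_of_continuousOn
    (f := fun p : ℝ × ℝ => v (p.1 + p.2)) (hv.comp continuous_add).continuousOn
  have hmeas : ∀ W : ℝ → A, Continuous W →
      AEStronglyMeasurable (fun τ => h τ * W τ) (volume.restrict (Ι a b)) := fun W hW =>
    hh.def'.aestronglyMeasurable.mul hW.aestronglyMeasurable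
  refine (hasDerivAt_integral_of_dominated_loc_of_deriv_le (ball_mem_nhds t one_pos)
    (.of_forall fun s => hmeas _ (hVc.comp (continuous_const_add s)))
    (hh.mul_continuousOn (hVc.comp (continuous_const_add t)).continuousOn)
    (hmeas _ (hv.comp (continuous_const_add t))) (bound := fun τ => ‖h τ‖ * C)
    (.of_forall fun τ hτ s hs => ?_) (hh.norm.mul_const C)
    (.of_forall fun τ _ s _ => ((hV (s + τ)).comp_add_const s τ).const_mul (h τ))).2
  refine (norm_mul_le _ _).trans (mul_le_mul_of_nonneg_left ?_ (norm_nonneg _))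
  exact hC (s, τ) ⟨ball_subset_closedBall hs, uIoc_subset_uIcc hτ⟩

theorem hasDerivAt_integral_mul_comp_add [CompleteSpace A] {u u' v : ℝ → A}
    (hu : ∀ τ ∈ [[a, b]], HasDerivAt u (u' τ) τ) (hu' : ContinuousOn u' [[a, b]])
    (hv : Continuous v) (t : ℝ) :
    HasDerivAt (fun s => ∫ τ in a..b, u τ * v (s + τ))
      (u b * v (t + b) - u a * v (t + a) - ∫ τ in a..b, u' τ * v (t + τ)) t := by
  set V : ℝ → A := fun s => ∫ σ in (0 : ℝ)..s, v σ
  have hV : ∀ s, HasDerivAt V (v s) s := fun s =>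
    integral_hasDerivAt_right (hv.intervalIntegrable _ _) (hv.stronglyMeasurableAtFilter _ _)
      hv.continuousAt
  have hu'i : IntervalIntegrable u' volume a b := hu'.intervalIntegrable
  have hV_add : ∀ c, HasDerivAt (fun s => V (s + c)) (v (t + c)) t := fun c =>
    (hV (t + c)).comp_add_const t c
  exact ((((hV_add b).const_mul (u b)).sub ((hV_add a).const_mul (u a))).sub
    (hasDerivAt_integral_mul_comp_add_of_hasDerivAt hu'i hV hv t)).congr_of_eventuallyEq
    (.of_forall (integral_mul_comp_add_eq_of_hasDerivAt hu hu'i hV hv))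

end intervalIntegral

theorem hasDerivAt_integral_comp_fst_mul_comp_snd {m n : Type*} [Fintype m] [Fintype n]
    [DecidableEq n] {a b : ℝ} {M : Matrix m m ℝ} {g : ℝ → m → ℝ} {x : ℝ → n → ℝ}
    (hg : ∀ τ ∈ [[a, b]], HasDerivAt g (M *ᵥ g τ) τ) (hx : Continuous x) (t : ℝ) :
    HasDerivAt (fun s => ∫ τ in a..b, (g τ ∘ Prod.fst) * (x (s + τ) ∘ Prod.snd))
      ((g b ∘ Prod.fst) * (x (t + b) ∘ Prod.snd) - (g a ∘ Prod.fst) * (x (t + a) ∘ Prod.snd)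
        - (M ⊗ₖ (1 : Matrix n n ℝ)) *ᵥ
            ∫ τ in a..b, (g τ ∘ Prod.fst) * (x (t + τ) ∘ Prod.snd)) t := by
  have hgc : ContinuousOn g [[a, b]] := fun τ hτ => (hg τ hτ).continuousAt.continuousWithinAt
  have hu : ∀ τ ∈ [[a, b]],
      HasDerivAt (fun τ => g τ ∘ (Prod.fst : m × n → m)) ((M *ᵥ g τ) ∘ Prod.fst) τ :=
    fun τ hτ => hasDerivAt_pi.2 fun p => hasDerivAt_pi.1 (hg τ hτ) p.1
  have hu' : ContinuousOn (fun τ => (M *ᵥ g τ) ∘ (Prod.fst : m × n → m)) [[a, b]] :=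
    (by fun_prop : Continuous fun w : m → ℝ => (M *ᵥ w) ∘ (Prod.fst : m × n → m))
      |>.comp_continuousOn hgc
  have hv : Continuous fun s => x s ∘ (Prod.snd : m × n → n) :=
    continuous_pi fun p => (continuous_apply p.2).comp hx
  have huv : IntervalIntegrable
      (fun τ => (g τ ∘ Prod.fst) * (x (t + τ) ∘ (Prod.snd : m × n → n))) volume a b :=
    (ContinuousOn.mul (fun τ hτ => (hu τ hτ).continuousAt.continuousWithinAt)
      (hv.comp (continuous_const_add t)).continuousOn).intervalIntegrable
  rw [← integral_mulVec _ huv]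
  simp_rw [kronecker_one_mulVec_mul]
  exact hasDerivAt_integral_mul_comp_add hu hu' hv t

theorem kf_distributed_term_deriv_general
    {d ν : ℕ} (r : ℝ) (hr : 0 < r)
    (Pi sqrtF : Matrix (Fin d) (Fin d) ℝ)
    (hsqrt : sqrtF.PosDef)
    (f : ℝ → Fin d → ℝ)
    (hode : ∀ τ ∈ Set.Icc (-r) (0 : ℝ), HasDerivAt f (Pi.mulVec (f τ)) τ)
    (Fm : ℝ → Matrix (Fin d × Fin ν) (Fin ν) ℝ)
    (hFm : ∀ τ, Fm τ = fun p j =>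
      (sqrtF.mulVec (f τ)) p.1 * (1 : Matrix (Fin ν) (Fin ν) ℝ) p.2 j)
    (x : ℝ → Fin ν → ℝ) (hxc : Continuous x)
    (t : ℝ) :
    HasDerivAt (fun s : ℝ => ∫ τ in (-r)..0, (Fm τ).mulVec (x (s + τ)))
      ((Fm 0).mulVec (x t) - (Fm (-r)).mulVec (x (t - r))
        - ((sqrtF * Pi * sqrtF⁻¹) ⊗ₖ (1 : Matrix (Fin ν) (Fin ν) ℝ)).mulVec
            (∫ τ in (-r)..0, (Fm τ).mulVec (x (t + τ)))) t := by
  have hconj : ∀ v, (sqrtF * Pi * sqrtF⁻¹) *ᵥ (sqrtF *ᵥ v) = sqrtF *ᵥ (Pi *ᵥ v) := fun v => by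
    rw [mulVec_mulVec, mulVec_mulVec, mul_assoc _ sqrtF⁻¹,
      nonsing_inv_mul _ ((isUnit_iff_isUnit_det _).1 hsqrt.isUnit), mul_one]
  have hg : ∀ τ ∈ [[-r, 0]], HasDerivAt (fun τ => sqrtF *ᵥ f τ)
      ((sqrtF * Pi * sqrtF⁻¹) *ᵥ (sqrtF *ᵥ f τ)) τ := fun τ hτ => by
    rw [hconj]
    exact (hode τ (uIcc_of_le (neg_nonpos.2 hr.le) ▸ hτ)).const_mulVec sqrtF
  have hFm_mulVec : ∀ τ w, Fm τ *ᵥ w = ((sqrtF *ᵥ f τ) ∘ Prod.fst) * (w ∘ Prod.snd) :=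
    fun τ w => by rw [hFm]; exact of_mul_one_mulVec _ w
  simp_rw [hFm_mulVec]
  simpa [sub_eq_add_neg] using hasDerivAt_integral_comp_fst_mul_comp_snd hg hxc t

/-- Differentiation identity for the distributed-delay term of the Krasovskii
functional: if `f' = Πf` on `[-r,0]` and `F(τ) = (√F f(τ)) ⊗ I_ν`, then
`d/dt ∫_{-r}^0 F(τ)x(t+τ)dτ
  = F(0)x(t) − F(−r)x(t−r) − ((√FΠ√F⁻¹) ⊗ I_ν) ∫_{-r}^0 F(τ)x(t+τ)dτ`. -/
theorem kf_distributed_term_deriv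
    {d ν : ℕ} (r : ℝ) (hr : 0 < r)
    (Pi F sqrtF : Matrix (Fin d) (Fin d) ℝ)
    (hF : F.PosDef) (hsqrt : sqrtF.PosDef) (hsq : sqrtF * sqrtF = F)
    (f : ℝ → Fin d → ℝ) (hf : ContDiff ℝ 1 f)
    (hode : ∀ τ ∈ Set.Icc (-r) (0 : ℝ), HasDerivAt f (Pi.mulVec (f τ)) τ)
    (Fm : ℝ → Matrix (Fin d × Fin ν) (Fin ν) ℝ)
    (hFm : ∀ τ, Fm τ = fun p j =>
      (sqrtF.mulVec (f τ)) p.1 * (1 : Matrix (Fin ν) (Fin ν) ℝ) p.2 j)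
    (x : ℝ → Fin ν → ℝ) (hxc : Continuous x) (hx : Differentiable ℝ x)
    (t : ℝ) :
    HasDerivAt (fun s : ℝ => ∫ τ in (-r)..0, (Fm τ).mulVec (x (s + τ)))
      ((Fm 0).mulVec (x t) - (Fm (-r)).mulVec (x (t - r))
        - ((sqrtF * Pi * sqrtF⁻¹) ⊗ₖ (1 : Matrix (Fin ν) (Fin ν) ℝ)).mulVec
            (∫ τ in (-r)..0, (Fm τ).mulVec (x (t + τ)))) t :=
  kf_distributed_term_deriv_general r hr Pi sqrtF hsqrt f hode Fm hFm x hxc t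
end

section
/- Let A ∈ ℝ^{n×n}, B ∈ ℝ^{n×p}, K ∈ ℝ^{p×n}, X ∈ ℝ^{p×p}, and r > 0. The characteristic function of the closed-loop system ẋ(t) = Ax(t) + Bu(t−r), u̇(t) = (KB + X)u(t) + (KA − XK)(e^{Ar}x(t) + ∫_{-r}^0 e^{-Aτ}Bu(t+τ)dτ) factors as det(sI_n − A − BK)·det(sI_p − X); hence if A + BK and X are both Hurwitz, every characteristic root has negative real part. -/
/-!
Write `N = sI − A` over `ℂ`. The integrand of the predictor term is the `(i, j)` entry of
`e^{τN} B`, so by the fundamental theorem of calculus the predictor integral `G` satisfies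
`N G = B − e^{−sr} e^{rA} B`. With this and `A e^{rA} = e^{rA} A`, the characteristic matrix `M`
satisfies
`[e^{rA}, 0; −Ke^{rA}, I] M = [sI−A−BK, −B; 0, sI−X] [I, 0; −K, I] [e^{rA}, G; 0, I]`
(one checks this block by block, using `N G` to eliminate `A G`),
and cancelling the unit `det e^{rA}` gives the factorization.
-/

open Matrix intervalIntegral

/-- The characteristic matrix (from the Laplace transform) of the closed-loop
system `ẋ = Ax(t) + Bu(t−r)`,
`u̇ = (KB+X)u(t) + (KA−XK)(e^{Ar}x(t) + ∫_{-r}^0 e^{-Aτ}Bu(t+τ)dτ)`. -/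
noncomputable def charMatrix {n p : ℕ} (A : Matrix (Fin n) (Fin n) ℝ)
    (B : Matrix (Fin n) (Fin p) ℝ) (K : Matrix (Fin p) (Fin n) ℝ)
    (X : Matrix (Fin p) (Fin p) ℝ) (r : ℝ) (s : ℂ) :
    Matrix (Fin n ⊕ Fin p) (Fin n ⊕ Fin p) ℂ :=
  Matrix.fromBlocks
    (s • (1 : Matrix (Fin n) (Fin n) ℂ) - A.map Complex.ofReal)
    (-(Complex.exp (-(s * r)) • B.map Complex.ofReal))
    (-(((K * A - X * K) * NormedSpace.exp (r • A)).map Complex.ofReal))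
    (s • (1 : Matrix (Fin p) (Fin p) ℂ) - (K * B + X).map Complex.ofReal -
      ((K * A - X * K).map Complex.ofReal) *
        (Matrix.of fun i j => ∫ τ in (-r)..0,
          Complex.exp (s * τ) *
            ((NormedSpace.exp ((-τ) • A) * B) i j : ℂ)))

open NormedSpace

section ExpIntegral

variable {𝕜 m n : Type*} [RCLike 𝕜] [Fintype m] [DecidableEq m]

theorem Matrix.hasDerivAt_exp_smul_mul_apply (N : Matrix m m 𝕜) (C : Matrix m n 𝕜)
    (i : m) (j : n) (t : ℝ) :
    HasDerivAt (fun τ : ℝ => (exp (τ • N) * C) i j) ((exp (t • N) * N * C) i j) t := by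
  open scoped Norms.Operator in
  let entry : Matrix m m 𝕜 →L[ℝ] 𝕜 :=
    LinearMap.toContinuousLinearMap
      { toFun := fun M => (M * C) i j
        map_add' := fun M M' => by simp [Matrix.add_mul]
        map_smul' := fun c M => by simp [Matrix.smul_mul] }
  exact entry.hasFDerivAt.comp_hasDerivAt t (hasDerivAt_exp_smul_const N t)

theorem Matrix.continuous_exp_smul_mul_apply (N : Matrix m m 𝕜) (C : Matrix m n 𝕜)
    (i : m) (j : n) : Continuous fun τ : ℝ => (exp (τ • N) * C) i j :=
  continuous_iff_continuousAt.2 fun t => (hasDerivAt_exp_smul_mul_apply N C i j t).continuousAt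

theorem Matrix.mul_of_integral_exp_smul_mul (N : Matrix m m 𝕜) (C : Matrix m n 𝕜)
    (a b : ℝ) :
    N * of (fun i j => ∫ τ in a..b, (exp (τ • N) * C) i j) =
      (exp (b • N) - exp (a • N)) * C := by
  ext i j
  have hcomm : ∀ τ : ℝ, N * exp (τ • N) = exp (τ • N) * N := fun τ =>
    ((Commute.refl N).smul_right τ).exp_right
  have hterm_cont : ∀ k, Continuous fun τ : ℝ => N i k * (exp (τ • N) * C) k j := fun k =>
    continuous_const.mul (continuous_exp_smul_mul_apply N C k j)
  have hderiv_cont : Continuous fun τ : ℝ => (exp (τ • N) * N * C) i j := by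
    simpa only [Matrix.mul_assoc] using continuous_exp_smul_mul_apply N (N * C) i j
  calc (N * of fun i j => ∫ τ in a..b, (exp (τ • N) * C) i j) i j
      = ∫ τ in a..b, ∑ k, N i k * (exp (τ • N) * C) k j := by
        rw [intervalIntegral.integral_finsetSum fun k _ => (hterm_cont k).intervalIntegrable a b]
        simp only [mul_apply, of_apply, integral_const_mul]
    _ = ∫ τ in a..b, (exp (τ • N) * N * C) i j := by
        simp only [← mul_apply, ← Matrix.mul_assoc, hcomm]
    _ = ((exp (b • N) - exp (a • N)) * C) i j := by
        rw [integral_eq_sub_of_hasDerivAt (fun t _ => hasDerivAt_exp_smul_mul_apply N C i j t)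
          (hderiv_cont.intervalIntegrable _ _), Matrix.sub_mul, sub_apply]

end ExpIntegral

theorem Matrix.map_ofReal_mul {l m n : Type*} [Fintype m] (M : Matrix l m ℝ)
    (N : Matrix m n ℝ) :
    (M * N).map Complex.ofReal = M.map Complex.ofReal * N.map Complex.ofReal :=
  Matrix.map_mul (f := Complex.ofRealHom)

theorem Matrix.exp_smul_sub_map_ofReal {m : Type*} [Fintype m] [DecidableEq m]
    (A : Matrix m m ℝ) (s : ℂ) (τ : ℝ) :
    exp (τ • (s • 1 - A.map Complex.ofReal)) =
      Complex.exp (s * τ) • (exp ((-τ) • A)).map Complex.ofReal := by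
  have hmap : (exp ((-τ) • A)).map Complex.ofReal = exp (((-τ) • A).map Complex.ofReal) :=
    open scoped Norms.Operator in
    map_exp Complex.ofRealHom.mapMatrix (continuous_id.matrix_map Complex.continuous_ofReal) _
  have hsplit : τ • (s • 1 - A.map Complex.ofReal) =
      algebraMap ℂ (Matrix m m ℂ) (s * τ) + ((-τ) • A).map Complex.ofReal := by
    ext i j
    simp only [smul_apply, sub_apply, one_apply, map_apply, add_apply,
      Algebra.algebraMap_eq_smul_one, smul_eq_mul, Complex.real_smul, Complex.ofReal_neg,
      Complex.ofReal_mul]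
    split_ifs <;> ring
  have hscalar : exp (algebraMap ℂ (Matrix m m ℂ) (s * τ)) =
      algebraMap ℂ (Matrix m m ℂ) (Complex.exp (s * τ)) := by
    open scoped Norms.Operator in
    rw [Complex.exp_eq_exp_ℂ]
    exact (algebraMap_exp_comm _).symm
  rw [hmap, hsplit, exp_add_of_commute _ _ (Algebra.commute_algebraMap_left _ _), hscalar,
    ← Algebra.smul_def]

section BlockAlgebra

variable {R m n : Type*} [CommRing R] [Fintype m] [DecidableEq m] [Fintype n] [DecidableEq n]

theorem Matrix.fromBlocks_mul_closedLoop_eq (A E : Matrix m m R) (B G : Matrix m n R)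
    (K : Matrix n m R) (X : Matrix n n R) (s c : R)
    (hG : (s • 1 - A) * G = B - c • (E * B)) (hAE : A * E = E * A) :
    fromBlocks E 0 (-(K * E)) 1 *
        fromBlocks (s • 1 - A) (-(c • B)) (-((K * A - X * K) * E))
          (s • 1 - (K * B + X) - (K * A - X * K) * G) =
      fromBlocks (s • 1 - A - B * K) (-B) 0 (s • 1 - X) * fromBlocks 1 0 (-K) 1 *
        fromBlocks E G 0 1 := by
  have hAG : A * G = s • G - (B - c • (E * B)) := by
    rw [← hG, Matrix.sub_mul, Matrix.smul_mul, Matrix.one_mul]; abel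
  simp only [fromBlocks_multiply, fromBlocks_inj]
  refine ⟨?_, ?_, ?_, ?_⟩ <;>
    simp only [Matrix.sub_mul, Matrix.mul_sub, Matrix.add_mul, Matrix.mul_add,
      Matrix.neg_mul, Matrix.mul_neg, Matrix.smul_mul, Matrix.mul_smul, Matrix.mul_one,
      Matrix.one_mul, Matrix.zero_mul, Matrix.mul_zero, Matrix.mul_assoc, hAG, hAE,
      smul_zero, smul_neg, neg_neg, add_zero, zero_add, sub_zero] <;>
    abel

theorem Matrix.det_fromBlocks_closedLoop (A E : Matrix m m R) (B G : Matrix m n R)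
    (K : Matrix n m R) (X : Matrix n n R) (s c : R)
    (hG : (s • 1 - A) * G = B - c • (E * B)) (hAE : A * E = E * A) (hE : IsUnit E.det) :
    (fromBlocks (s • 1 - A) (-(c • B)) (-((K * A - X * K) * E))
        (s • 1 - (K * B + X) - (K * A - X * K) * G)).det =
      (s • 1 - A - B * K).det * (s • 1 - X).det := by
  have h := congrArg det (fromBlocks_mul_closedLoop_eq A E B G K X s c hG hAE)
  simp only [det_mul, det_fromBlocks_zero₁₂, det_fromBlocks_zero₂₁, det_one, mul_one] at h
  exact hE.mul_left_cancel (by rw [h]; ring)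

end BlockAlgebra

theorem Matrix.smul_one_sub_map_ofReal_mul_of_integral {m n : Type*} [Fintype m] [DecidableEq m]
    (A : Matrix m m ℝ) (B : Matrix m n ℝ) (r : ℝ) (s : ℂ) :
    (s • 1 - A.map Complex.ofReal) *
        of (fun i j => ∫ τ in (-r)..0,
          Complex.exp (s * τ) * ((exp ((-τ) • A) * B) i j : ℂ)) =
      B.map Complex.ofReal -
        Complex.exp (-(s * r)) • ((exp (r • A)).map Complex.ofReal * B.map Complex.ofReal) := by
  have hintegrand : ∀ (τ : ℝ) i j, Complex.exp (s * τ) * ((exp ((-τ) • A) * B) i j : ℂ) =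
      (exp (τ • (s • 1 - A.map Complex.ofReal)) * B.map Complex.ofReal) i j := by
    intro τ i j
    rw [exp_smul_sub_map_ofReal, smul_mul, smul_apply, ← map_ofReal_mul, map_apply, smul_eq_mul]
  simp_rw [hintegrand]
  rw [mul_of_integral_exp_smul_mul, zero_smul, exp_zero, exp_smul_sub_map_ofReal, neg_neg,
    Matrix.sub_mul, Matrix.one_mul, smul_mul, Complex.ofReal_neg, mul_neg]

theorem det_charMatrix {n p : ℕ} (A : Matrix (Fin n) (Fin n) ℝ) (B : Matrix (Fin n) (Fin p) ℝ)
    (K : Matrix (Fin p) (Fin n) ℝ) (X : Matrix (Fin p) (Fin p) ℝ) (r : ℝ) (s : ℂ) :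
    (charMatrix A B K X r s).det =
      (s • (1 : Matrix (Fin n) (Fin n) ℂ) - (A + B * K).map Complex.ofReal).det *
        (s • (1 : Matrix (Fin p) (Fin p) ℂ) - X.map Complex.ofReal).det := by
  have hE : IsUnit ((exp (r • A)).map Complex.ofReal).det :=
    (isUnit_iff_isUnit_det _).1 ((isUnit_exp (r • A)).map Complex.ofRealHom.mapMatrix)
  have hAE : A.map Complex.ofReal * (exp (r • A)).map Complex.ofReal =
      (exp (r • A)).map Complex.ofReal * A.map Complex.ofReal := by
    rw [← map_ofReal_mul, ← map_ofReal_mul, ((Commute.refl A).smul_right r).exp_right.eq]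
  rw [charMatrix, map_ofReal_mul (K * A - X * K), Matrix.map_sub _ Complex.ofReal_sub,
    Matrix.map_add _ Complex.ofReal_add, map_ofReal_mul K A, map_ofReal_mul X K,
    map_ofReal_mul K B, det_fromBlocks_closedLoop _ _ _ _ _ _ s _
      (smul_one_sub_map_ofReal_mul_of_integral A B r s) hAE hE,
    Matrix.map_add _ Complex.ofReal_add, map_ofReal_mul, sub_sub]

theorem closed_loop_spectrum_factorization_general
    {n p : ℕ} (A : Matrix (Fin n) (Fin n) ℝ) (B : Matrix (Fin n) (Fin p) ℝ)
    (K : Matrix (Fin p) (Fin n) ℝ) (X : Matrix (Fin p) (Fin p) ℝ)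
    (r : ℝ)
    (hABK : ∀ s : ℂ,
      (s • (1 : Matrix (Fin n) (Fin n) ℂ) - (A + B * K).map Complex.ofReal).det = 0 →
        s.re < 0)
    (hX : ∀ s : ℂ,
      (s • (1 : Matrix (Fin p) (Fin p) ℂ) - X.map Complex.ofReal).det = 0 →
        s.re < 0) :
    (∀ s : ℂ, (charMatrix A B K X r s).det =
        (s • (1 : Matrix (Fin n) (Fin n) ℂ) - (A + B * K).map Complex.ofReal).det *
          (s • (1 : Matrix (Fin p) (Fin p) ℂ) - X.map Complex.ofReal).det) ∧
    (∀ s : ℂ, (charMatrix A B K X r s).det = 0 → s.re < 0) := by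
  refine ⟨det_charMatrix A B K X r, fun s hs => ?_⟩
  rw [det_charMatrix, mul_eq_zero] at hs
  exact hs.elim (hABK s) (hX s)

/-- The characteristic function of the closed loop with the predictor-based
dynamical controller factors as `det(sI−A−BK)·det(sI−X)`; hence if `A+BK` and
`X` are Hurwitz, every characteristic root has negative real part. -/
theorem closed_loop_spectrum_factorization
    {n p : ℕ} (A : Matrix (Fin n) (Fin n) ℝ) (B : Matrix (Fin n) (Fin p) ℝ)
    (K : Matrix (Fin p) (Fin n) ℝ) (X : Matrix (Fin p) (Fin p) ℝ)
    (r : ℝ) (hr : 0 < r)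
    (hABK : ∀ s : ℂ,
      (s • (1 : Matrix (Fin n) (Fin n) ℂ) - (A + B * K).map Complex.ofReal).det = 0 →
        s.re < 0)
    (hX : ∀ s : ℂ,
      (s • (1 : Matrix (Fin p) (Fin p) ℂ) - X.map Complex.ofReal).det = 0 →
        s.re < 0) :
    (∀ s : ℂ, (charMatrix A B K X r s).det =
        (s • (1 : Matrix (Fin n) (Fin n) ℂ) - (A + B * K).map Complex.ofReal).det *
          (s • (1 : Matrix (Fin p) (Fin p) ℂ) - X.map Complex.ofReal).det) ∧
    (∀ s : ℂ, (charMatrix A B K X r s).det = 0 → s.re < 0) :=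
  closed_loop_spectrum_factorization_general A B K X r hABK hX
end

section
/- Let A ∈ ℝ^{n×n}, B ∈ ℝ^{n×p}, r > 0, and K ∈ ℝ^{p×n}. If u : ℝ → ℝ^p and x : ℝ → ℝ^n are C¹ and satisfy ẋ(t) = Ax(t) + Bu(t−r) and the predictor relation u(t) = K(e^{Ar} x(t) + ∫_{-r}^0 e^{-Aτ} B u(t+τ) dτ) for all t, then for any X ∈ ℝ^{p×p}, u̇(t) = (KB + X)u(t) + (KA − XK)(e^{Ar} x(t) + ∫_{-r}^0 e^{-Aτ} B u(t+τ) dτ). -/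
/-!
The predictor `P t = e^{rA} x t + ∫_{-r}^0 e^{-τA} B u (t + τ) dτ` obeys the delay-free
equation `Ṗ = A P + B u`. Substituting `s = t + τ` writes its integral part as
`e^{tA} ∫_{t-r}^t e^{-sA} B u s ds`, whose derivative is `A` applied to it plus
`B u t - e^{rA} B u (t - r)`, and the last term cancels the delayed input in `e^{rA} ẋ`.
Hence `u = K P` gives `u̇ = K (A P + B u)`, and adding `X u - X K P = 0` yields the claim.
-/

open Matrix intervalIntegral NormedSpace

theorem exp_add_smul {𝔸 : Type*} [NormedRing 𝔸] [NormedAlgebra ℝ 𝔸] [CompleteSpace 𝔸]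
    (a : 𝔸) (s t : ℝ) : exp ((s + t) • a) = exp (s • a) * exp (t • a) := by
  let : NormedAlgebra ℚ 𝔸 := .restrictScalars ℚ ℝ 𝔸
  rw [add_smul, exp_add_of_commute (((Commute.refl a).smul_left s).smul_right t)]

section Predictor

variable {E : Type*} [NormedAddCommGroup E] [NormedSpace ℝ E] [CompleteSpace E]
  (a : E →L[ℝ] E) {f : ℝ → E}

theorem continuous_exp_neg_smul_apply (hf : Continuous f) :
    Continuous fun s => exp ((-s) • a) (f s) :=
  ((differentiable_exp_smul_const ℝ a).continuous.comp continuous_neg).clm_apply hf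

theorem integral_exp_smul_comp_add (hf : Continuous f) (r t : ℝ) :
    ∫ τ in (-r)..0, exp ((-τ) • a) (f (t + τ)) =
      exp (t • a) (∫ s in (t - r)..t, exp ((-s) • a) (f s)) := by
  have hsplit : ∀ τ, exp ((-τ) • a) (f (t + τ)) =
      exp (t • a) (exp ((-(τ + t)) • a) (f (τ + t))) := by
    intro τ
    rw [← mul_apply_eq_comp, ← exp_add_smul a]
    ring_nf
  simp_rw [hsplit]
  rw [integral_comp_add_right (fun s => exp (t • a) (exp ((-s) • a) (f s))),
    (exp (t • a)).intervalIntegral_comp_comm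
      ((continuous_exp_neg_smul_apply a hf).intervalIntegrable _ _),
    neg_add_eq_sub, zero_add]

theorem hasDerivAt_integral_exp_smul_comp_add (hf : Continuous f) (r t : ℝ) :
    HasDerivAt (fun t => ∫ τ in (-r)..0, exp ((-τ) • a) (f (t + τ)))
      (a (∫ τ in (-r)..0, exp ((-τ) • a) (f (t + τ))) + f t - exp (r • a) (f (t - r)))
      t := by
  set g := fun s => exp ((-s) • a) (f s)
  have hg : Continuous g := continuous_exp_neg_smul_apply a hf
  have hwindow : ∀ t, ∫ s in (t - r)..t, g s =
      (∫ s in (0 : ℝ)..t, g s) - ∫ s in (0 : ℝ)..(t - r), g s := fun t =>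
    (integral_interval_sub_left (hg.intervalIntegrable _ _)
      (hg.intervalIntegrable _ _)).symm
  have hwindow_deriv : HasDerivAt (fun t => ∫ s in (t - r)..t, g s) (g t - g (t - r)) t := by
    simp_rw [hwindow]
    exact (hg.integral_hasStrictDerivAt 0 t).hasDerivAt.sub
      ((hg.integral_hasStrictDerivAt 0 (t - r)).hasDerivAt.comp_sub_const t r)
  have hcancel : exp (t • a) (g t) = f t := by
    rw [← mul_apply_eq_comp, ← exp_add_smul a, add_neg_cancel, zero_smul, exp_zero]
    rfl
  have hdelay : exp (t • a) (g (t - r)) = exp (r • a) (f (t - r)) := by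
    rw [← mul_apply_eq_comp, ← exp_add_smul a, neg_sub, add_sub_cancel]
  simp_rw [integral_exp_smul_comp_add a hf r]
  convert (hasDerivAt_exp_smul_const' a t).clm_apply hwindow_deriv using 1
  rw [mul_apply_eq_comp, map_sub, hcancel, hdelay, add_sub_assoc]

/-- The paper's predictor `P t`: for `ẋ = a x + f (· - r)` it is the state `x (t + r)` that the
input already applied by time `t` will produce. -/
noncomputable def predictor (r : ℝ) (x f : ℝ → E) (t : ℝ) : E :=
  exp (r • a) (x t) + ∫ τ in (-r)..0, exp ((-τ) • a) (f (t + τ))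

theorem hasDerivAt_predictor (hf : Continuous f) {r t : ℝ} {x : ℝ → E}
    (hx : HasDerivAt x (a (x t) + f (t - r)) t) :
    HasDerivAt (predictor a r x f) (a (predictor a r x f t) + f t) t := by
  have hcomm : exp (r • a) (a (x t)) = a (exp (r • a) (x t)) := by
    rw [← mul_apply_eq_comp, ← mul_apply_eq_comp,
      ((Commute.refl a).smul_right r).exp_right.eq]
  refine (((exp (r • a)).hasFDerivAt.comp_hasDerivAt t hx).add
    (hasDerivAt_integral_exp_smul_comp_add a hf r t)).congr_deriv ?_
  simp only [predictor, map_add, hcomm]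
  abel

end Predictor

namespace Matrix

variable {𝕜 : Type*} [RCLike 𝕜] {m n : Type*} [Fintype n]

noncomputable def mulVecCLM (M : Matrix m n 𝕜) : (n → 𝕜) →L[𝕜] m → 𝕜 :=
  LinearMap.toContinuousLinearMap M.mulVecLin

@[simp]
theorem mulVecCLM_apply (M : Matrix m n 𝕜) (v : n → 𝕜) : M.mulVecCLM v = M *ᵥ v := rfl

@[simp]
theorem mulVecCLM_smul (s : 𝕜) (M : Matrix m n 𝕜) : (s • M).mulVecCLM = s • M.mulVecCLM := by
  ext
  simp [smul_mulVec]

theorem mulVecCLM_exp [DecidableEq n] (A : Matrix n n 𝕜) :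
    (exp A).mulVecCLM = exp A.mulVecCLM := by
  let : NormedRing (Matrix n n 𝕜) := Matrix.linftyOpNormedRing
  let : NormedAlgebra 𝕜 (Matrix n n 𝕜) := Matrix.linftyOpNormedAlgebra
  let : NormedAlgebra ℚ (Matrix n n 𝕜) := .restrictScalars ℚ 𝕜 _
  let : NormedAlgebra ℚ ((n → 𝕜) →L[𝕜] n → 𝕜) := .restrictScalars ℚ 𝕜 _
  -- the operator-norm uniformity is not reducibly the product one that `CompleteSpace` would find
  have : @CompleteSpace (Matrix n n 𝕜) PseudoMetricSpace.toUniformSpace :=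
    FiniteDimensional.complete 𝕜 _
  let φ : Matrix n n 𝕜 ≃ₐ[𝕜] ((n → 𝕜) →L[𝕜] n → 𝕜) :=
    toLinAlgEquiv'.trans (Module.End.toContinuousLinearMap _)
  exact map_exp φ (LinearMap.continuous_of_finiteDimensional φ.toLinearMap) A

theorem exp_smul_mulVec [DecidableEq n] (A : Matrix n n 𝕜) (s : 𝕜) (v : n → 𝕜) :
    exp (s • A) *ᵥ v = exp (s • A.mulVecCLM) v := by
  rw [← mulVecCLM_apply, mulVecCLM_exp, mulVecCLM_smul]

end Matrix

theorem Matrix.add_mulVec_add_sub_mulVec_of_eq_mulVec {R : Type*} [CommRing R]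
    {m n : Type*} [Fintype m] [Fintype n]
    (A : Matrix n n R) (B : Matrix n m R) (K : Matrix m n R) (X : Matrix m m R)
    {v : n → R} {w : m → R} (hw : w = K *ᵥ v) :
    (K * B + X) *ᵥ w + (K * A - X * K) *ᵥ v = K *ᵥ (A *ᵥ v + B *ᵥ w) := by
  subst hw
  simp only [add_mulVec, sub_mulVec, mulVec_add, ← mulVec_mulVec]
  abel

theorem predictor_implies_dynamic_controller_general
    {n p : ℕ} (A : Matrix (Fin n) (Fin n) ℝ) (B : Matrix (Fin n) (Fin p) ℝ)
    (r : ℝ) (K : Matrix (Fin p) (Fin n) ℝ)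
    (x : ℝ → Fin n → ℝ) (u u' : ℝ → Fin p → ℝ)
    (hu : ∀ t : ℝ, HasDerivAt u (u' t) t)
    (hx : ∀ t : ℝ, HasDerivAt x (A.mulVec (x t) + B.mulVec (u (t - r))) t)
    (hpred : ∀ t : ℝ, u t = K.mulVec
      ((NormedSpace.exp (r • A)).mulVec (x t) +
        ∫ τ in (-r)..0, (NormedSpace.exp ((-τ) • A) * B).mulVec (u (t + τ))))
    (X : Matrix (Fin p) (Fin p) ℝ) :
    ∀ t : ℝ, HasDerivAt u
      ((K * B + X).mulVec (u t) +
        (K * A - X * K).mulVec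
          ((NormedSpace.exp (r • A)).mulVec (x t) +
            ∫ τ in (-r)..0,
              (NormedSpace.exp ((-τ) • A) * B).mulVec (u (t + τ)))) t := by
  intro t
  set P := predictor A.mulVecCLM r x (B *ᵥ u ·)
  have hP : ∀ s,
      exp (r • A) *ᵥ x s + ∫ τ in (-r)..0, (exp ((-τ) • A) * B) *ᵥ u (s + τ) = P s := fun s => by
    simp only [P, predictor, ← mulVec_mulVec, exp_smul_mulVec]
  have hBu : Continuous (B *ᵥ u ·) :=
    B.mulVecCLM.continuous.comp (continuous_iff_continuousAt.2 fun s => (hu s).continuousAt)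
  simp only [hP] at hpred ⊢
  have hKP : HasDerivAt (fun s => K *ᵥ P s) (K *ᵥ (A *ᵥ P t + B *ᵥ u t)) t :=
    K.mulVecCLM.hasFDerivAt.comp_hasDerivAt t (hasDerivAt_predictor _ hBu (hx t))
  rw [← funext hpred] at hKP
  rwa [add_mulVec_add_sub_mulVec_of_eq_mulVec A B K X (hpred t)]

/-- If `x` solves `ẋ = Ax + Bu(t−r)` and `u` is `C¹` satisfying the predictor
relation `u(t) = K(e^{Ar}x(t) + ∫_{-r}^0 e^{-Aτ}Bu(t+τ)dτ)`, then `u` obeys the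
dynamical controller equation
`u̇ = (KB+X)u + (KA−XK)(e^{Ar}x + ∫_{-r}^0 e^{-Aτ}Bu(t+τ)dτ)` for any `X`. -/
theorem predictor_implies_dynamic_controller
    {n p : ℕ} (A : Matrix (Fin n) (Fin n) ℝ) (B : Matrix (Fin n) (Fin p) ℝ)
    (r : ℝ) (hr : 0 < r) (K : Matrix (Fin p) (Fin n) ℝ)
    (x : ℝ → Fin n → ℝ) (u u' : ℝ → Fin p → ℝ)
    (hu' : Continuous u')
    (hu : ∀ t : ℝ, HasDerivAt u (u' t) t)
    (hx : ∀ t : ℝ, HasDerivAt x (A.mulVec (x t) + B.mulVec (u (t - r))) t)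
    (hpred : ∀ t : ℝ, u t = K.mulVec
      ((NormedSpace.exp (r • A)).mulVec (x t) +
        ∫ τ in (-r)..0, (NormedSpace.exp ((-τ) • A) * B).mulVec (u (t + τ))))
    (X : Matrix (Fin p) (Fin p) ℝ) :
    ∀ t : ℝ, HasDerivAt u
      ((K * B + X).mulVec (u t) +
        (K * A - X * K).mulVec
          ((NormedSpace.exp (r • A)).mulVec (x t) +
            ∫ τ in (-r)..0,
              (NormedSpace.exp ((-τ) • A) * B).mulVec (u (t + τ)))) t :=
  predictor_implies_dynamic_controller_general A B r K x u u' hu hx hpred X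
end
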